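/- (One-third trick domination.) For i = 0, 1, 2, let D^i := ∪_{j∈ℤ} D^i_j, where D^i_j := { 2^{-j}([0,1) + m + (−1)^j · i/3) : m ∈ ℤ }. Then for every locally integrable f on ℝ and every x ∈ ℝ, Mf(x) ≤ 6 ( M^{D^0} f(x) + M^{D^1} f(x) ), where M is the maximal function over all finite intervals containing x and M^{D^i} is the maximal function over intervals of D^i containing x. -/

import Mathlib

/-!
Every interval `[a, b]` of length `ℓ` lies in a cell of `D⁰` or of `D¹` of the dyadic size
`δ ∈ (3ℓ, 6ℓ]`. At that scale the endpoints of `D⁰` form `δℤ` and those of `D¹` form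
`δ(ℤ ± 1/3)`, so an endpoint of one grid is at distance at least `δ/3 > ℓ` from every endpoint
of the other: `[a, b]` meets the endpoints of at most one grid and lies in a single cell of the
other one. Averaging `|f|` over that cell instead of the interval loses a factor at most `6`.
-/

open MeasureTheory ENNReal

noncomputable section

/-- Average of `f` over a set `I ⊆ ℝ` with respect to Lebesgue measure. -/
def iAvg (I : Set ℝ) (f : ℝ → ℝ) : ℝ :=
  (volume I).toReal⁻¹ * ∫ x in I, f x

/-- A finite (bounded, nondegenerate) interval of `ℝ`. -/
def IsBoundedInterval (I : Set ℝ) : Prop :=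
  ∃ a b : ℝ, a < b ∧ Set.Ioo a b ⊆ I ∧ I ⊆ Set.Icc a b

/-- The (uncentered) maximal function over all finite intervals containing `x`. -/
def intMaxFn (f : ℝ → ℝ) (x : ℝ) : ℝ≥0∞ :=
  ⨆ I : {I : Set ℝ // IsBoundedInterval I ∧ x ∈ I},
    ENNReal.ofReal (iAvg I.1 fun y => |f y|)

/-- The interval `2^{-j}([0,1) + m + (-1)^j i/3)` of the shifted grid `D^i`. -/
def thirdGridInt (i : ℕ) (j m : ℤ) : Set ℝ :=
  Set.Ico ((2:ℝ) ^ (-j) * ((m : ℝ) + (-1:ℝ) ^ j * (i : ℝ) / 3))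
    ((2:ℝ) ^ (-j) * ((m : ℝ) + 1 + (-1:ℝ) ^ j * (i : ℝ) / 3))

/-- The maximal function over the intervals of the grid `D^i` containing `x`. -/
def gridMaxFn (i : ℕ) (f : ℝ → ℝ) (x : ℝ) : ℝ≥0∞ :=
  ⨆ jm : {jm : ℤ × ℤ // x ∈ thirdGridInt i jm.1 jm.2},
    ENNReal.ofReal (iAvg (thirdGridInt i jm.1.1 jm.1.2) fun y => |f y|)

lemma one_third_le_abs_intCast_sub_neg_one_zpow_div_three (t j : ℤ) :
    (1:ℝ) / 3 ≤ |(t:ℝ) - (-1:ℝ) ^ j / 3| := by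
  rw [le_abs]
  rcases Int.even_or_odd j with hj | hj
  · rw [hj.neg_one_zpow]
    rcases le_or_gt t 0 with ht | ht
    · right; have : (t:ℝ) ≤ 0 := by exact_mod_cast ht
      linarith
    · left; have : (1:ℝ) ≤ t := by exact_mod_cast ht
      linarith
  · rw [hj.neg_one_zpow]
    rcases le_or_gt t (-1) with ht | ht
    · right; have : (t:ℝ) ≤ -1 := by exact_mod_cast ht
      linarith
    · left; have : (0:ℝ) ≤ t := by exact_mod_cast (show (0:ℤ) ≤ t by omega)
      linarith

lemma exists_Icc_subset_Ico_of_forall_notMem {δ s a b : ℝ} (hδ : 0 < δ)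
    (h : ∀ k : ℤ, δ * (k + s) ∉ Set.Icc a b) :
    ∃ m : ℤ, Set.Icc a b ⊆ Set.Ico (δ * (m + s)) (δ * (m + 1 + s)) := by
  set m := ⌊a / δ - s⌋
  have hlo : δ * (m + s) ≤ a :=
    (le_div_iff₀' hδ).1 (by linarith [Int.floor_le (a / δ - s)])
  have hup : a < δ * (m + 1 + s) :=
    (div_lt_iff₀' hδ).1 (by linarith [Int.lt_floor_add_one (a / δ - s)])
  have hb : b < δ * (m + 1 + s) := by
    by_contra! hb
    exact h (m + 1) ⟨by push_cast; linarith, by push_cast; linarith⟩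
  exact ⟨m, fun y hy => ⟨hlo.trans hy.1, hy.2.trans_lt hb⟩⟩

lemma exists_thirdGridInt_superset {a b : ℝ} (hab : a < b) :
    ∃ i : ℕ, (i = 0 ∨ i = 1) ∧ ∃ j m : ℤ,
      Set.Icc a b ⊆ thirdGridInt i j m ∧ (2:ℝ) ^ (-j) ≤ 6 * (b - a) := by
  obtain ⟨n, hn, hn'⟩ := exists_mem_Ico_zpow (by linarith : (0:ℝ) < 3 * (b - a)) one_lt_two
  have hδ : 0 < (2:ℝ) ^ (-(-(n + 1))) := zpow_pos two_pos _
  have hδ_gt : 3 * (b - a) < (2:ℝ) ^ (-(-(n + 1))) := by rwa [neg_neg]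
  have hδ_le : (2:ℝ) ^ (-(-(n + 1))) ≤ 6 * (b - a) := by
    rw [neg_neg, zpow_add_one₀ two_ne_zero]; linarith
  set j : ℤ := -(n + 1)
  set δ : ℝ := (2:ℝ) ^ (-j)
  obtain ⟨i, hi, hmiss⟩ : ∃ i : ℕ, (i = 0 ∨ i = 1) ∧
      ∀ k : ℤ, δ * (k + (-1:ℝ) ^ j * (i:ℝ) / 3) ∉ Set.Icc a b := by
    by_cases h0 : ∃ k : ℤ, δ * (k + (-1:ℝ) ^ j * ((0:ℕ):ℝ) / 3) ∈ Set.Icc a b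
    · refine ⟨1, Or.inr rfl, fun m hm => ?_⟩
      obtain ⟨k, hk⟩ := h0
      have hdist : |δ * (((k - m : ℤ):ℝ) - (-1:ℝ) ^ j / 3)| ≤ b - a := by
        rw [abs_le]
        simp only [Set.mem_Icc, Nat.cast_zero, Nat.cast_one] at hk hm
        push_cast
        constructor <;> linarith [hk.1, hk.2, hm.1, hm.2]
      rw [abs_mul, abs_of_pos hδ] at hdist
      have := mul_le_mul_of_nonneg_left
        (one_third_le_abs_intCast_sub_neg_one_zpow_div_three (k - m) j) hδ.le
      linarith
    · exact ⟨0, Or.inl rfl, not_exists.1 h0⟩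
  obtain ⟨m, hm⟩ := exists_Icc_subset_Ico_of_forall_notMem hδ hmiss
  exact ⟨i, hi, j, m, hm, hδ_le⟩

lemma volume_eq_ofReal_sub_of_Ioo_subset_of_subset_Icc {I : Set ℝ} {a b : ℝ}
    (hIoo : Set.Ioo a b ⊆ I) (hIcc : I ⊆ Set.Icc a b) : volume I = ENNReal.ofReal (b - a) :=
  le_antisymm ((measure_mono hIcc).trans_eq Real.volume_Icc)
    (Real.volume_Ioo ▸ measure_mono hIoo)

lemma volume_thirdGridInt (i : ℕ) (j m : ℤ) :
    volume (thirdGridInt i j m) = ENNReal.ofReal ((2:ℝ) ^ (-j)) := by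
  rw [thirdGridInt, Real.volume_Ico]
  ring_nf

lemma iAvg_le_mul_iAvg_of_subset {I J : Set ℝ} {g : ℝ → ℝ} {c : ℝ} (hg : 0 ≤ g)
    (hgJ : IntegrableOn g J) (hIJ : I ⊆ J) (hI : 0 < (volume I).toReal)
    (hJ : 0 < (volume J).toReal) (hvol : (volume J).toReal ≤ c * (volume I).toReal) :
    iAvg I g ≤ c * iAvg J g := by
  have hint : ∫ y in I, g y ≤ ∫ y in J, g y :=
    setIntegral_mono_set hgJ (.of_forall hg) hIJ.eventuallyLE
  have hinv : (volume I).toReal⁻¹ ≤ c * (volume J).toReal⁻¹ := by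
    rw [inv_le_iff_one_le_mul₀ hI, mul_right_comm, ← div_eq_mul_inv, le_div_iff₀ hJ, one_mul]
    exact hvol
  calc iAvg I g ≤ (volume I).toReal⁻¹ * ∫ y in J, g y := by
        unfold iAvg; gcongr
    _ ≤ c * (volume J).toReal⁻¹ * ∫ y in J, g y := by
        gcongr; exact integral_nonneg hg
    _ = c * iAvg J g := by rw [iAvg, mul_assoc]

lemma ofReal_iAvg_le_gridMaxFn {i : ℕ} {j m : ℤ} {f : ℝ → ℝ} {x : ℝ}
    (hx : x ∈ thirdGridInt i j m) :
    ENNReal.ofReal (iAvg (thirdGridInt i j m) fun y => |f y|) ≤ gridMaxFn i f x :=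
  le_iSup_of_le (ι := {jm : ℤ × ℤ // x ∈ thirdGridInt i jm.1 jm.2}) ⟨(j, m), hx⟩ le_rfl

/-- **one-third trick domination.** For every locally integrable `f` on `ℝ`
and every `x`, `Mf(x) ≤ 6 (M^{D⁰} f(x) + M^{D¹} f(x))`. -/
theorem one_third_trick_domination (f : ℝ → ℝ)
    (hf : MeasureTheory.LocallyIntegrable f volume) (x : ℝ) :
    intMaxFn f x ≤ 6 * (gridMaxFn 0 f x + gridMaxFn 1 f x) := by
  refine iSup_le fun ⟨I, ⟨a, b, hab, hIoo, hIcc⟩, hxI⟩ => ?_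
  obtain ⟨i, hi, j, m, hsub, hlen⟩ := exists_thirdGridInt_superset hab
  have hIJ : I ⊆ thirdGridInt i j m := hIcc.trans hsub
  have hδ : (0:ℝ) < 2 ^ (-j) := zpow_pos two_pos _
  have havg : iAvg I (fun y => |f y|) ≤ 6 * iAvg (thirdGridInt i j m) fun y => |f y| := by
    have hvolI := volume_eq_ofReal_sub_of_Ioo_subset_of_subset_Icc hIoo hIcc
    refine iAvg_le_mul_iAvg_of_subset (fun _ => abs_nonneg _)
      ((hf.integrableOn_isCompact isCompact_Icc).mono_set Set.Ico_subset_Icc_self).abs hIJ ?_ ?_ ?_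
      <;> simp only [volume_thirdGridInt, hvolI, ENNReal.toReal_ofReal hδ.le,
        ENNReal.toReal_ofReal (sub_pos.2 hab).le]
      <;> linarith
  have hgrid : gridMaxFn i f x ≤ gridMaxFn 0 f x + gridMaxFn 1 f x := by
    rcases hi with rfl | rfl
    exacts [le_self_add, le_add_self]
  calc ENNReal.ofReal (iAvg I fun y => |f y|)
      ≤ ENNReal.ofReal 6 * ENNReal.ofReal (iAvg (thirdGridInt i j m) fun y => |f y|) := by
        rw [← ENNReal.ofReal_mul (by norm_num)]; exact ENNReal.ofReal_le_ofReal havg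
    _ ≤ 6 * (gridMaxFn 0 f x + gridMaxFn 1 f x) := by
        rw [ENNReal.ofReal_ofNat]
        gcongr
        exact (ofReal_iAvg_le_gridMaxFn (hIJ hxI)).trans hgrid

end
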